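/- arXiv:2103.16357 — 2 statements merged into one kernel-verified Lean document; each statement's English description precedes it below -/
import Mathlib

section
/- There is a universal constant C > 0 such that for every Banach space X, every integer m ≥ 2, and every function Φ : {−1,1}^m → X: 𝔼_ε ‖Φ(ε)‖ ≤ ‖𝔼_ε Φ(ε)‖ + C · σ_Φ · T2^{(m)}(X). -/
open scoped BigOperators

noncomputable section

def sgnR (b : Bool) : ℝ := if b then 1 else -1

/-- Uniform average of a real-valued function over a finite type. -/
def Eavg {α : Type} [Fintype α] (f : α → ℝ) : ℝ := (∑ x, f x) / (Fintype.card α : ℝ)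

/-- Uniform average of a vector-valued function over a finite type. -/
def EavgVR {α : Type} [Fintype α] {X : Type*} [AddCommGroup X] [Module ℝ X] (f : α → X) : X :=
  (Fintype.card α : ℝ)⁻¹ • ∑ x, f x

/-- Flip the `p`-th sign of `ε`. -/
def flipAt {ι : Type} [DecidableEq ι] (ε : ι → Bool) (p : ι) : ι → Bool :=
  Function.update ε p (!(ε p))

/-- The regularity parameter `σ_Φ` of a map on the Boolean hypercube with values in a
normed space; `‖∂_pΦ(ε)‖ = ‖Φ(ε) − Φ(ε̄^p)‖/2`. -/
def sigma {ι : Type} [Fintype ι] [DecidableEq ι] {X : Type*} [NormedAddCommGroup X]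
    (Φ : (ι → Bool) → X) : ℝ :=
  Real.log (Fintype.card ι) *
    Eavg fun ε => Real.sqrt (∑ p : ι, (‖Φ ε - Φ (flipAt ε p)‖ / 2) ^ 2)

/-- The type-2 constant with `m` vectors of a normed space. -/
def T2With (m : ℕ) (X : Type*) [NormedAddCommGroup X] [NormedSpace ℝ X] : ℝ :=
  sInf {T : ℝ | 0 ≤ T ∧ ∀ x : Fin m → X,
    Real.sqrt (Eavg fun ε : Fin m → Bool => ‖∑ i, sgnR (ε i) • x i‖ ^ 2)
      ≤ T * Real.sqrt (∑ i, ‖x i‖ ^ 2)}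

/-!
The noise semigroup `T_s Φ(ε) = 𝔼_δ ∏_q (1 + s ε_q δ_q) Φ(δ)` interpolates between `T_0 Φ = 𝔼 Φ`
and `T_1 Φ = Φ`, so `Φ − 𝔼 Φ = ∫₀¹ (d/ds) T_s Φ ds`. Pairing `δ` with `δ̄^q` rewrites the
derivative as `2/(1 − s²) · 𝔼_δ ∏_q (1 + s ε_q δ_q) ∑_q ((ε_q δ_q − s)/2) ∂_qΦ(δ)`
(Ivanisvili–van Handel–Volberg). The coefficients lie in `[−1, 1]`, so by convexity each inner sum
is dominated by an average of Rademacher sums `‖∑_q ρ_q ∂_qΦ(δ)‖` over signs `ρ_q` of mean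
`(ε_q δ_q − s)/2`, and averaging over `ε` makes `(δ, ρ)` uniform:
`𝔼‖(d/ds) T_s Φ‖ ≤ 2/(1 − s) · 𝔼_{δ,ρ} ‖∑_q ρ_q ∂_qΦ(δ)‖`. For `s ≥ 1 − 1/m` the cruder bound
`m · 𝔼_{δ,ρ} ‖…‖` is used, and integrating gives the factor `2 log m + 1`. Finally, Jensen and
the type-2 inequality bound `𝔼_ρ ‖∑_q ρ_q ∂_qΦ(δ)‖` by `T2^{(m)}(X) (∑_q ‖∂_qΦ(δ)‖²)^{1/2}`.
-/

namespace Pisier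

open Finset

section Signs

variable {X : Type*} [NormedAddCommGroup X] [NormedSpace ℝ X]

@[simp] lemma sgnR_true : sgnR true = 1 := rfl

@[simp] lemma sgnR_false : sgnR false = -1 := rfl

lemma sgnR_mul_self (b : Bool) : sgnR b * sgnR b = 1 := by cases b <;> norm_num

lemma abs_sgnR (b : Bool) : |sgnR b| = 1 := by cases b <;> norm_num

lemma sgnR_not (b : Bool) : sgnR (!b) = -sgnR b := by cases b <;> simp

lemma norm_sgnR_smul (b : Bool) (x : X) : ‖sgnR b • x‖ = ‖x‖ := by
  rw [norm_smul, Real.norm_eq_abs, abs_sgnR, one_mul]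

/-- The probability that a random sign with mean `a` takes the value `x = ±1`. -/
def signProb (a x : ℝ) : ℝ := (1 + a * x) / 2

lemma signProb_nonneg {a x : ℝ} (ha : |a| ≤ 1) (hx : |x| ≤ 1) : 0 ≤ signProb a x := by
  have : |a * x| ≤ 1 := by
    rw [abs_mul]
    nlinarith [abs_nonneg a, abs_nonneg x]
  unfold signProb
  linarith [neg_abs_le (a * x)]

end Signs

section Average

variable {α : Type} [Fintype α]

lemma Eavg_mono {f g : α → ℝ} (h : ∀ a, f a ≤ g a) : Eavg f ≤ Eavg g :=
  div_le_div_of_nonneg_right (sum_le_sum fun a _ => h a) (Nat.cast_nonneg _)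

lemma Eavg_nonneg {f : α → ℝ} (h : ∀ a, 0 ≤ f a) : 0 ≤ Eavg f :=
  div_nonneg (sum_nonneg fun a _ => h a) (Nat.cast_nonneg _)

lemma Eavg_const_mul (c : ℝ) (f : α → ℝ) : Eavg (fun a => c * f a) = c * Eavg f := by
  simp only [Eavg, ← mul_sum, mul_div_assoc]

lemma Eavg_const [Nonempty α] (c : ℝ) : Eavg (fun _ : α => c) = c := by
  have : (Fintype.card α : ℝ) ≠ 0 := Nat.cast_ne_zero.2 Fintype.card_ne_zero
  simp only [Eavg, sum_const, card_univ, nsmul_eq_mul]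
  field_simp

lemma Eavg_const_add [Nonempty α] (c : ℝ) (f : α → ℝ) :
    Eavg (fun a => c + f a) = c + Eavg f := by
  have : (Fintype.card α : ℝ) ≠ 0 := Nat.cast_ne_zero.2 Fintype.card_ne_zero
  simp only [Eavg, sum_add_distrib, sum_const, card_univ, nsmul_eq_mul]
  field_simp

lemma Eavg_le_sqrt_Eavg_sq [Nonempty α] {f : α → ℝ} (hf : ∀ a, 0 ≤ f a) :
    Eavg f ≤ √(Eavg fun a => f a ^ 2) := by
  have hcard : (0 : ℝ) < Fintype.card α := Nat.cast_pos.2 Fintype.card_pos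
  rw [Real.le_sqrt (Eavg_nonneg hf) (Eavg_nonneg fun a => sq_nonneg (f a)), Eavg, Eavg, div_pow,
    div_le_div_iff₀ (by positivity) hcard, sq (Fintype.card α : ℝ), ← mul_assoc]
  have := sq_sum_le_card_mul_sum_sq (s := univ) (f := f)
  rw [card_univ] at this
  nlinarith

lemma Eavg_norm_le_norm_add_Eavg_norm_sub [Nonempty α] {X : Type*} [NormedAddCommGroup X]
    (f : α → X) (c : X) : Eavg (fun a => ‖f a‖) ≤ ‖c‖ + Eavg fun a => ‖f a - c‖ := by
  rw [← Eavg_const_add]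
  exact Eavg_mono fun a => norm_le_insert' (f a) c

lemma integral_Eavg {f : α → ℝ → ℝ} {a b : ℝ}
    (hf : ∀ x, IntervalIntegrable (f x) MeasureTheory.volume a b) :
    ∫ s in a..b, Eavg (fun x => f x s) = Eavg fun x => ∫ s in a..b, f x s := by
  simp only [Eavg, intervalIntegral.integral_div,
    intervalIntegral.integral_finsetSum fun x _ => hf x]

end Average

section Cube

variable {ι : Type} [DecidableEq ι]

lemma flipAt_apply_self (ε : ι → Bool) (q : ι) : flipAt ε q q = !ε q :=
  Function.update_self ..

lemma flipAt_apply_of_ne (ε : ι → Bool) {q r : ι} (h : r ≠ q) : flipAt ε q r = ε r :=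
  Function.update_of_ne h ..

lemma flipAt_flipAt (ε : ι → Bool) (q : ι) : flipAt (flipAt ε q) q = ε := by
  funext r
  by_cases h : r = q
  · subst h
    simp [flipAt_apply_self]
  · simp [flipAt_apply_of_ne _ h]

variable [Fintype ι]

lemma card_cube : (Fintype.card (ι → Bool) : ℝ) = 2 ^ Fintype.card ι := by
  simp

lemma Eavg_cube (f : (ι → Bool) → ℝ) : Eavg f = ((2 : ℝ) ^ Fintype.card ι)⁻¹ * ∑ ε, f ε := by
  rw [Eavg, card_cube, div_eq_inv_mul]

lemma sum_comp_flipAt {M : Type*} [AddCommMonoid M] (q : ι) (F : (ι → Bool) → M) :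
    ∑ δ, F (flipAt δ q) = ∑ δ, F δ :=
  Equiv.sum_comp (Function.Involutive.toPerm _ (flipAt_flipAt · q)) F

lemma sum_cube_prod (g : ι → Bool → ℝ) :
    ∑ ε : ι → Bool, ∏ r, g r (ε r) = ∏ r, (g r true + g r false) := by
  simp only [← Fintype.prod_sum, Fintype.sum_bool]

lemma sum_cube_mul_prod_erase (q : ι) (g : Bool → ℝ) (f : ι → Bool → ℝ) :
    ∑ ε : ι → Bool, g (ε q) * ∏ r ∈ univ.erase q, f r (ε r) =
      (g true + g false) * ∏ r ∈ univ.erase q, (f r true + f r false) := by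
  have h := sum_cube_prod fun r b => if r = q then g b else f r b
  simpa only [ite_add_ite, prod_ite, filter_eq', filter_ne', mem_univ, if_true,
    prod_singleton] using h

end Cube

section Rademacher

variable {ι : Type} [Fintype ι] {X : Type*} [NormedAddCommGroup X] [NormedSpace ℝ X]

def signedSum (x : ι → X) (ρ : ι → Bool) : X := ∑ q, sgnR (ρ q) • x q

/-- The probability of `ρ` when its signs are independent with means `a`. -/
def signWeight (a : ι → ℝ) (ρ : ι → Bool) : ℝ := ∏ i, signProb (a i) (sgnR (ρ i))

lemma signWeight_nonneg {a : ι → ℝ} (ha : ∀ i, |a i| ≤ 1) (ρ : ι → Bool) :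
    0 ≤ signWeight a ρ :=
  prod_nonneg fun i _ => signProb_nonneg (ha i) (abs_sgnR (ρ i)).le

variable [DecidableEq ι]

lemma signedSum_sub_signedSum_flipAt (x : ι → X) (ρ : ι → Bool) (q : ι) :
    signedSum x ρ - signedSum x (flipAt ρ q) = (2 * sgnR (ρ q)) • x q := by
  rw [signedSum, signedSum, ← sum_sub_distrib, sum_eq_single q]
  · rw [flipAt_apply_self, sgnR_not, ← sub_smul]
    ring_nf
  · intro r _ hr
    rw [flipAt_apply_of_ne _ hr, sub_self]
  · simp

lemma norm_le_Eavg_norm_signedSum (x : ι → X) (q : ι) :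
    ‖x q‖ ≤ Eavg fun ρ => ‖signedSum x ρ‖ := by
  have hpair : ∀ ρ, 2 * ‖x q‖ ≤ ‖signedSum x ρ‖ + ‖signedSum x (flipAt ρ q)‖ := fun ρ => by
    calc 2 * ‖x q‖ = ‖(2 * sgnR (ρ q)) • x q‖ := by
          rw [mul_smul, norm_smul, norm_sgnR_smul, Real.norm_two]
      _ ≤ _ := by
          rw [← signedSum_sub_signedSum_flipAt]
          exact norm_sub_le _ _
  have hsum := sum_le_sum fun ρ (_ : ρ ∈ univ) => hpair ρ
  rw [← mul_sum, sum_add_distrib, sum_comp_flipAt q fun ρ => ‖signedSum x ρ‖, sum_const,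
    card_univ, nsmul_eq_mul] at hsum
  rw [Eavg, le_div_iff₀ (by positivity)]
  linarith

lemma sum_signWeight_mul_sgnR (a : ι → ℝ) (q : ι) :
    ∑ ρ : ι → Bool, signWeight a ρ * sgnR (ρ q) = a q := by
  have split : ∀ ρ : ι → Bool, signWeight a ρ * sgnR (ρ q) =
      signProb (a q) (sgnR (ρ q)) * sgnR (ρ q) *
        ∏ i ∈ univ.erase q, signProb (a i) (sgnR (ρ i)) := fun ρ => by
    rw [signWeight, ← mul_prod_erase univ _ (mem_univ q)]
    ring
  rw [sum_congr rfl fun ρ _ => split ρ, sum_cube_mul_prod_erase q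
    (fun b => signProb (a q) (sgnR b) * sgnR b) fun i b => signProb (a i) (sgnR b)]
  simp only [signProb, sgnR_true, sgnR_false]
  ring_nf
  simp

/-- Convexity: `∑ a_q v_q` is the mean of `∑ ρ_q v_q` over independent signs `ρ_q` of mean `a_q`. -/
lemma norm_sum_smul_le (a : ι → ℝ) (ha : ∀ q, |a q| ≤ 1) (v : ι → X) :
    ‖∑ q, a q • v q‖ ≤ ∑ ρ : ι → Bool, signWeight a ρ * ‖signedSum v ρ‖ := by
  have hmean : ∑ q, a q • v q =
      ∑ ρ : ι → Bool, signWeight a ρ • signedSum v ρ := by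
    simp only [signedSum, smul_sum, smul_smul]
    rw [sum_comm]
    simp only [← sum_smul, sum_signWeight_mul_sgnR]
  rw [hmean]
  refine (norm_sum_le _ _).trans (le_of_eq (sum_congr rfl fun ρ _ => ?_))
  rw [norm_smul, Real.norm_of_nonneg (signWeight_nonneg ha ρ)]

end Rademacher

section Noise

variable {ι : Type} {X : Type*} [NormedAddCommGroup X] [NormedSpace ℝ X]

def signProd (ε δ : ι → Bool) (q : ι) : ℝ := sgnR (ε q) * sgnR (δ q)

lemma signProd_mul_self (ε δ : ι → Bool) (q : ι) : signProd ε δ q * signProd ε δ q = 1 := by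
  rw [signProd, mul_mul_mul_comm, sgnR_mul_self, sgnR_mul_self, one_mul]

lemma abs_signProd (ε δ : ι → Bool) (q : ι) : |signProd ε δ q| = 1 := by
  rw [signProd, abs_mul, abs_sgnR, abs_sgnR, one_mul]

lemma signProd_self (ε : ι → Bool) (q : ι) : signProd ε ε q = 1 := sgnR_mul_self (ε q)

lemma signProd_of_ne {ε δ : ι → Bool} {q : ι} (h : ε q ≠ δ q) : signProd ε δ q = -1 := by
  rw [signProd]
  cases hε : ε q <;> cases hδ : δ q <;> simp_all

/-- Where the factor `2 / (1 - s²)` comes from: `(1 + s c) (c - s) = c (1 - s²)` for `c = ±1`. -/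
lemma signProb_mul_eq {s c : ℝ} (hc : c * c = 1) (hs : 1 - s ^ 2 ≠ 0) :
    signProb s c * (2 / (1 - s ^ 2) * ((c - s) / 2)) = c / 2 := by
  rw [signProb]
  field_simp
  linear_combination s * hc

variable [DecidableEq ι]

lemma signProd_flipAt_self (ε δ : ι → Bool) (q : ι) :
    signProd ε (flipAt δ q) q = -signProd ε δ q := by
  rw [signProd, signProd, flipAt_apply_self, sgnR_not, mul_neg]

lemma signProd_flipAt_of_ne (ε δ : ι → Bool) {q r : ι} (h : r ≠ q) :
    signProd ε (flipAt δ q) r = signProd ε δ r := by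
  rw [signProd, signProd, flipAt_apply_of_ne _ h]

def discDeriv (Φ : (ι → Bool) → X) (q : ι) (δ : ι → Bool) : X :=
  (2 : ℝ)⁻¹ • (Φ δ - Φ (flipAt δ q))

lemma norm_discDeriv (Φ : (ι → Bool) → X) (q : ι) (δ : ι → Bool) :
    ‖discDeriv Φ q δ‖ = ‖Φ δ - Φ (flipAt δ q)‖ / 2 := by
  rw [discDeriv, norm_smul, norm_inv, Real.norm_two, inv_mul_eq_div]

variable [Fintype ι]

lemma sum_smul_eq_sum_smul_discDeriv (Φ : (ι → Bool) → X) (q : ι) {c : (ι → Bool) → ℝ}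
    (hc : ∀ δ, c (flipAt δ q) = -c δ) :
    ∑ δ, c δ • Φ δ = ∑ δ, c δ • discDeriv Φ q δ := by
  have hflip : ∑ δ, c δ • Φ (flipAt δ q) = -∑ δ, c δ • Φ δ := by
    rw [← sum_comp_flipAt q, ← sum_neg_distrib]
    exact sum_congr rfl fun δ _ => by rw [hc, flipAt_flipAt, neg_smul]
  simp only [discDeriv, smul_comm _ (2 : ℝ)⁻¹, smul_sub, ← smul_sum, sum_sub_distrib, hflip]
  module

def noiseWeight (s : ℝ) (ε δ : ι → Bool) : ℝ := ∏ q, signProb s (signProd ε δ q)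

def noiseOp (Φ : (ι → Bool) → X) (s : ℝ) (ε : ι → Bool) : X :=
  ∑ δ, noiseWeight s ε δ • Φ δ

def noiseDeriv (Φ : (ι → Bool) → X) (s : ℝ) (ε : ι → Bool) : X :=
  ∑ δ, (∑ q, (∏ r ∈ univ.erase q, signProb s (signProd ε δ r)) * (signProd ε δ q / 2)) • Φ δ

lemma hasDerivAt_noiseOp (Φ : (ι → Bool) → X) (ε : ι → Bool) (s : ℝ) :
    HasDerivAt (noiseOp Φ · ε) (noiseDeriv Φ s ε) s := by
  refine HasDerivAt.fun_sum fun δ _ => ?_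
  have hfactor : ∀ q ∈ univ, HasDerivAt (signProb · (signProd ε δ q)) (signProd ε δ q / 2) s :=
    fun q _ => by
      simpa [signProb] using
        (((hasDerivAt_id s).mul_const (signProd ε δ q)).const_add 1).div_const 2
  simpa [noiseWeight, smul_eq_mul] using (HasDerivAt.finsetProd hfactor).smul_const (Φ δ)

lemma continuous_noiseDeriv (Φ : (ι → Bool) → X) (ε : ι → Bool) :
    Continuous (noiseDeriv Φ · ε) := by
  unfold noiseDeriv signProb
  fun_prop

lemma noiseOp_one (Φ : (ι → Bool) → X) (ε : ι → Bool) : noiseOp Φ 1 ε = Φ ε := by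
  have hweight : ∀ δ, noiseWeight 1 ε δ = if δ = ε then 1 else 0 := fun δ => by
    split_ifs with h
    · subst h
      exact prod_eq_one fun q _ => by rw [signProd_self, signProb]; norm_num
    · obtain ⟨q, hq⟩ : ∃ q, ε q ≠ δ q := by
        by_contra! hc
        exact h (funext fun q => (hc q).symm)
      exact prod_eq_zero (mem_univ q) (by rw [signProd_of_ne hq, signProb]; norm_num)
  simp [noiseOp, hweight]

lemma noiseOp_zero (Φ : (ι → Bool) → X) (ε : ι → Bool) : noiseOp Φ 0 ε = EavgVR Φ := by
  simp [noiseOp, noiseWeight, EavgVR, signProb, ← smul_sum]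

lemma noiseDeriv_eq_sum_discDeriv (Φ : (ι → Bool) → X) (s : ℝ) (ε : ι → Bool) :
    noiseDeriv Φ s ε = ∑ q, ∑ δ,
      ((∏ r ∈ univ.erase q, signProb s (signProd ε δ r)) * (signProd ε δ q / 2)) •
        discDeriv Φ q δ := by
  rw [noiseDeriv]
  simp only [sum_smul]
  rw [sum_comm]
  refine sum_congr rfl fun q _ => sum_smul_eq_sum_smul_discDeriv Φ q fun δ => ?_
  rw [signProd_flipAt_self, prod_congr rfl fun r hr =>
    by rw [signProd_flipAt_of_ne _ _ (ne_of_mem_erase hr)]]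
  ring

lemma noiseDeriv_eq (Φ : (ι → Bool) → X) {s : ℝ} (hs : 1 - s ^ 2 ≠ 0) (ε : ι → Bool) :
    noiseDeriv Φ s ε = ∑ δ, noiseWeight s ε δ •
      (2 / (1 - s ^ 2)) • ∑ q, ((signProd ε δ q - s) / 2) • discDeriv Φ q δ := by
  rw [noiseDeriv_eq_sum_discDeriv, sum_comm]
  refine sum_congr rfl fun δ _ => ?_
  simp only [smul_sum, smul_smul]
  refine sum_congr rfl fun q _ => ?_
  rw [noiseWeight, ← mul_prod_erase univ _ (mem_univ q), ← signProb_mul_eq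
    (signProd_mul_self ε δ q) hs]
  ring_nf

end Noise

section Bounds

variable {ι : Type} [Fintype ι] [DecidableEq ι] {X : Type*} [NormedAddCommGroup X]
  [NormedSpace ℝ X]

def rademacherGrad (Φ : (ι → Bool) → X) : ℝ :=
  Eavg fun δ => Eavg fun ρ => ‖signedSum (fun q => discDeriv Φ q δ) ρ‖

lemma rademacherGrad_nonneg (Φ : (ι → Bool) → X) : 0 ≤ rademacherGrad Φ :=
  Eavg_nonneg fun _ => Eavg_nonneg fun _ => norm_nonneg _

lemma sum_prod_erase_signProb (s : ℝ) (δ : ι → Bool) (q : ι) :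
    ∑ ε : ι → Bool, ∏ r ∈ univ.erase q, signProb s (signProd ε δ r) = 2 := by
  have h := sum_cube_mul_prod_erase q (fun _ => 1) fun r b => signProb s (sgnR b * sgnR (δ r))
  have hpair : ∀ r,
      signProb s (sgnR true * sgnR (δ r)) + signProb s (sgnR false * sgnR (δ r)) = 1 := fun r => by
    simp only [signProb, sgnR_true, sgnR_false]
    ring
  simp only [one_mul, hpair, prod_const_one] at h
  exact h.trans (by norm_num)

lemma norm_noiseDeriv_le_sum {s : ℝ} (hs : |s| ≤ 1) (Φ : (ι → Bool) → X)
    (ε : ι → Bool) :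
    ‖noiseDeriv Φ s ε‖ ≤ ∑ q, ∑ δ,
      (∏ r ∈ univ.erase q, signProb s (signProd ε δ r)) * (‖discDeriv Φ q δ‖ / 2) := by
  rw [noiseDeriv_eq_sum_discDeriv]
  refine (norm_sum_le _ _).trans (sum_le_sum fun q _ => (norm_sum_le _ _).trans
    (sum_le_sum fun δ _ => le_of_eq ?_))
  rw [norm_smul, Real.norm_eq_abs, abs_mul, abs_div, abs_signProd, abs_two,
    abs_of_nonneg (prod_nonneg fun r _ => signProb_nonneg hs (abs_signProd ε δ r).le)]
  ring

lemma Eavg_norm_noiseDeriv_le_card {s : ℝ} (hs : |s| ≤ 1) (Φ : (ι → Bool) → X) :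
    Eavg (fun ε => ‖noiseDeriv Φ s ε‖) ≤ Fintype.card ι * rademacherGrad Φ := by
  have hsum : ∑ ε, ‖noiseDeriv Φ s ε‖ ≤ ∑ q, ∑ δ, ‖discDeriv Φ q δ‖ := by
    calc ∑ ε, ‖noiseDeriv Φ s ε‖
        ≤ ∑ ε, ∑ q, ∑ δ,
            (∏ r ∈ univ.erase q, signProb s (signProd ε δ r)) * (‖discDeriv Φ q δ‖ / 2) :=
          sum_le_sum fun ε _ => norm_noiseDeriv_le_sum hs Φ ε
      _ = ∑ q, ∑ δ, ‖discDeriv Φ q δ‖ := by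
          rw [sum_comm]
          refine sum_congr rfl fun q _ => ?_
          rw [sum_comm]
          simp only [← sum_mul, sum_prod_erase_signProb]
          ring_nf
  calc Eavg (fun ε => ‖noiseDeriv Φ s ε‖)
      ≤ ((2 : ℝ) ^ Fintype.card ι)⁻¹ * ∑ q, ∑ δ, ‖discDeriv Φ q δ‖ := by
        rw [Eavg_cube]
        gcongr
    _ = ∑ q, Eavg fun δ => ‖discDeriv Φ q δ‖ := by simp only [Eavg_cube, mul_sum]
    _ ≤ ∑ _q : ι, rademacherGrad Φ :=
        sum_le_sum fun q _ => Eavg_mono fun δ => norm_le_Eavg_norm_signedSum (discDeriv Φ · δ) q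
    _ = Fintype.card ι * rademacherGrad Φ := by simp

lemma sum_noiseWeight_mul_signWeight (s : ℝ) (δ ρ : ι → Bool) :
    ∑ ε, noiseWeight s ε δ * signWeight (fun i => (signProd ε δ i - s) / 2) ρ =
      ((2 : ℝ) ^ Fintype.card ι)⁻¹ := by
  have hfactor : ∀ d e : ℝ, d * d = 1 →
      signProb s d * signProb ((d - s) / 2) e + signProb s (-d) * signProb ((-d - s) / 2) e
        = 1 / 2 := fun d e hd => by
    simp only [signProb]
    linear_combination (s * e / 4) * hd
  have h := sum_cube_prod fun i b =>
    signProb s (sgnR b * sgnR (δ i)) * signProb ((sgnR b * sgnR (δ i) - s) / 2) (sgnR (ρ i))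
  simp only [sgnR_true, sgnR_false, one_mul, neg_one_mul,
    hfactor _ _ (sgnR_mul_self _), prod_const, card_univ] at h
  simp only [noiseWeight, signWeight, ← prod_mul_distrib]
  exact h.trans (by rw [one_div, inv_pow])

lemma norm_noiseDeriv_le {s : ℝ} (hs : |s| < 1) (Φ : (ι → Bool) → X)
    (ε : ι → Bool) :
    ‖noiseDeriv Φ s ε‖ ≤ 2 / (1 - s ^ 2) * ∑ δ, ∑ ρ,
      noiseWeight s ε δ * signWeight (fun i => (signProd ε δ i - s) / 2) ρ *
        ‖signedSum (fun q => discDeriv Φ q δ) ρ‖ := by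
  have hs2 : 0 < 1 - s ^ 2 := sub_pos.2 ((sq_lt_one_iff_abs_lt_one s).2 hs)
  rw [noiseDeriv_eq Φ hs2.ne', mul_sum]
  refine (norm_sum_le _ _).trans (sum_le_sum fun δ _ => ?_)
  have hweight : 0 ≤ noiseWeight s ε δ := prod_nonneg fun r _ =>
    signProb_nonneg hs.le (abs_signProd ε δ r).le
  have hcoeff : ∀ q, |(signProd ε δ q - s) / 2| ≤ 1 := fun q => by
    rw [abs_div, abs_two, div_le_one two_pos]
    linarith [abs_sub (signProd ε δ q) s, abs_signProd ε δ q]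
  rw [norm_smul, norm_smul, Real.norm_of_nonneg hweight,
    Real.norm_of_nonneg (by positivity : (0 : ℝ) ≤ 2 / (1 - s ^ 2))]
  calc noiseWeight s ε δ * (2 / (1 - s ^ 2) * ‖∑ q, ((signProd ε δ q - s) / 2) • discDeriv Φ q δ‖)
      ≤ noiseWeight s ε δ * (2 / (1 - s ^ 2) * ∑ ρ,
          signWeight (fun i => (signProd ε δ i - s) / 2) ρ *
            ‖signedSum (fun q => discDeriv Φ q δ) ρ‖) := by
        gcongr
        exact norm_sum_smul_le _ hcoeff _
    _ = _ := by
        rw [mul_sum, mul_sum, mul_sum]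
        exact sum_congr rfl fun ρ _ => by ring

lemma Eavg_norm_noiseDeriv_le {s : ℝ} (hs : |s| < 1) (Φ : (ι → Bool) → X) :
    Eavg (fun ε => ‖noiseDeriv Φ s ε‖) ≤ 2 / (1 - s ^ 2) * rademacherGrad Φ := by
  have hswap : ∀ N : (ι → Bool) → (ι → Bool) → ℝ, ∑ ε, ∑ δ, ∑ ρ,
      noiseWeight s ε δ * signWeight (fun i => (signProd ε δ i - s) / 2) ρ * N δ ρ =
        ((2 : ℝ) ^ Fintype.card ι)⁻¹ * ∑ δ, ∑ ρ, N δ ρ := fun N => by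
    rw [sum_comm, mul_sum]
    refine sum_congr rfl fun δ _ => ?_
    rw [sum_comm, mul_sum]
    simp only [← sum_mul, sum_noiseWeight_mul_signWeight]
  calc Eavg (fun ε => ‖noiseDeriv Φ s ε‖)
      ≤ ((2 : ℝ) ^ Fintype.card ι)⁻¹ * ∑ ε, 2 / (1 - s ^ 2) * ∑ δ, ∑ ρ,
          noiseWeight s ε δ * signWeight (fun i => (signProd ε δ i - s) / 2) ρ *
            ‖signedSum (fun q => discDeriv Φ q δ) ρ‖ := by
        rw [Eavg_cube]
        gcongr with ε
        exact norm_noiseDeriv_le hs Φ ε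
    _ = 2 / (1 - s ^ 2) * rademacherGrad Φ := by
        rw [← mul_sum, hswap, rademacherGrad, Eavg_cube]
        simp only [Eavg_cube, mul_sum]
        ring_nf

end Bounds

section Inequality

variable {ι : Type} [Fintype ι] [DecidableEq ι] {X : Type*} [NormedAddCommGroup X]
  [NormedSpace ℝ X]

lemma integral_inv_one_sub {u : ℝ} (hu : u < 1) :
    ∫ s in (0 : ℝ)..u, (1 - s)⁻¹ = -Real.log (1 - u) := by
  have hpos : ∀ x ∈ Set.uIcc (1 - u) 1, 0 < x := fun x hx => by
    rcases Set.mem_uIcc.1 hx with h | h <;> linarith [h.1]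
  rw [intervalIntegral.integral_comp_sub_left (fun x => x⁻¹) 1, sub_zero,
    integral_inv fun h => (hpos 0 h).ne rfl, one_div, Real.log_inv]

lemma Eavg_norm_sub_mean_le_integral [CompleteSpace X] (Φ : (ι → Bool) → X) :
    Eavg (fun ε => ‖Φ ε - EavgVR Φ‖) ≤ ∫ s in (0 : ℝ)..1, Eavg fun ε => ‖noiseDeriv Φ s ε‖ := by
  rw [integral_Eavg fun ε => ((continuous_noiseDeriv Φ ε).norm.intervalIntegrable 0 1)]
  refine Eavg_mono fun ε => ?_
  have hftc : ∫ s in (0 : ℝ)..1, noiseDeriv Φ s ε = Φ ε - EavgVR Φ := by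
    rw [intervalIntegral.integral_eq_sub_of_hasDerivAt
      (fun s _ => hasDerivAt_noiseOp Φ ε s) ((continuous_noiseDeriv Φ ε).intervalIntegrable 0 1),
      noiseOp_one, noiseOp_zero]
  rw [← hftc]
  exact intervalIntegral.norm_integral_le_integral_norm zero_le_one

lemma continuous_Eavg_norm_noiseDeriv (Φ : (ι → Bool) → X) :
    Continuous fun s => Eavg fun ε => ‖noiseDeriv Φ s ε‖ :=
  (continuous_finsetSum _ fun ε _ => (continuous_noiseDeriv Φ ε).norm).div_const _

lemma integral_Eavg_norm_noiseDeriv_le_log {u : ℝ} (hu0 : 0 ≤ u) (hu1 : u < 1)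
    (Φ : (ι → Bool) → X) :
    ∫ s in (0 : ℝ)..u, Eavg (fun ε => ‖noiseDeriv Φ s ε‖) ≤
      -2 * Real.log (1 - u) * rademacherGrad Φ := by
  have hint : IntervalIntegrable (fun s => 2 * rademacherGrad Φ * (1 - s)⁻¹)
      MeasureTheory.volume 0 u := by
    refine ContinuousOn.intervalIntegrable (continuousOn_const.mul
      ((continuousOn_const.sub continuousOn_id).inv₀ fun s hs => ?_))
    rw [Set.uIcc_of_le hu0] at hs
    show 1 - s ≠ 0
    linarith [hs.2]
  calc ∫ s in (0 : ℝ)..u, Eavg (fun ε => ‖noiseDeriv Φ s ε‖)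
      ≤ ∫ s in (0 : ℝ)..u, 2 * rademacherGrad Φ * (1 - s)⁻¹ := by
        refine intervalIntegral.integral_mono_on hu0
          ((continuous_Eavg_norm_noiseDeriv Φ).intervalIntegrable _ _) hint fun s hs => ?_
        have hs1 : s < 1 := hs.2.trans_lt hu1
        calc Eavg (fun ε => ‖noiseDeriv Φ s ε‖) ≤ 2 / (1 - s ^ 2) * rademacherGrad Φ :=
              Eavg_norm_noiseDeriv_le (abs_lt.2 ⟨by linarith [hs.1], hs1⟩) Φ
          _ ≤ 2 / (1 - s) * rademacherGrad Φ := by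
              have := rademacherGrad_nonneg Φ
              gcongr 2 / ?_ * _
              nlinarith [hs.1]
          _ = 2 * rademacherGrad Φ * (1 - s)⁻¹ := by ring
    _ = -2 * Real.log (1 - u) * rademacherGrad Φ := by
        rw [intervalIntegral.integral_const_mul, integral_inv_one_sub hu1]
        ring

lemma integral_Eavg_norm_noiseDeriv_le_card {u : ℝ} (hu0 : 0 ≤ u) (hu1 : u ≤ 1)
    (Φ : (ι → Bool) → X) :
    ∫ s in u..1, Eavg (fun ε => ‖noiseDeriv Φ s ε‖) ≤
      (1 - u) * Fintype.card ι * rademacherGrad Φ := by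
  calc ∫ s in u..1, Eavg (fun ε => ‖noiseDeriv Φ s ε‖)
      ≤ ∫ s in u..1, Fintype.card ι * rademacherGrad Φ :=
        intervalIntegral.integral_mono_on hu1
          ((continuous_Eavg_norm_noiseDeriv Φ).intervalIntegrable _ _)
          intervalIntegrable_const fun s hs =>
            Eavg_norm_noiseDeriv_le_card (abs_le.2 ⟨by linarith [hs.1], hs.2⟩) Φ
    _ = (1 - u) * Fintype.card ι * rademacherGrad Φ := by
        rw [intervalIntegral.integral_const, smul_eq_mul]
        ring

theorem Eavg_norm_sub_mean_le [CompleteSpace X] [Nonempty ι] (Φ : (ι → Bool) → X) :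
    Eavg (fun ε => ‖Φ ε - EavgVR Φ‖) ≤
      (2 * Real.log (Fintype.card ι) + 1) * rademacherGrad Φ := by
  set m : ℝ := (Fintype.card ι : ℝ)
  have hm : 0 < m := Nat.cast_pos.2 Fintype.card_pos
  have hu0 : 0 ≤ 1 - m⁻¹ :=
    sub_nonneg.2 (inv_le_one_of_one_le₀ (Nat.one_le_cast.2 Fintype.card_pos))
  have hu1 : 1 - m⁻¹ < 1 := sub_lt_self 1 (inv_pos.2 hm)
  have hN := continuous_Eavg_norm_noiseDeriv Φ
  calc Eavg (fun ε => ‖Φ ε - EavgVR Φ‖)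
      ≤ ∫ s in (0 : ℝ)..1, Eavg (fun ε => ‖noiseDeriv Φ s ε‖) :=
        Eavg_norm_sub_mean_le_integral Φ
    _ = (∫ s in (0 : ℝ)..1 - m⁻¹, Eavg (fun ε => ‖noiseDeriv Φ s ε‖)) +
          ∫ s in 1 - m⁻¹..1, Eavg (fun ε => ‖noiseDeriv Φ s ε‖) :=
        (intervalIntegral.integral_add_adjacent_intervals (hN.intervalIntegrable _ _)
          (hN.intervalIntegrable _ _)).symm
    _ ≤ -2 * Real.log (1 - (1 - m⁻¹)) * rademacherGrad Φ +
          (1 - (1 - m⁻¹)) * m * rademacherGrad Φ :=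
        add_le_add (integral_Eavg_norm_noiseDeriv_le_log hu0 hu1 Φ)
          (integral_Eavg_norm_noiseDeriv_le_card hu0 hu1.le Φ)
    _ = (2 * Real.log m + 1) * rademacherGrad Φ := by
        rw [sub_sub_cancel, Real.log_inv, inv_mul_cancel₀ hm.ne']
        ring

end Inequality

section TypeTwo

variable {X : Type*} [NormedAddCommGroup X] [NormedSpace ℝ X]

lemma sqrt_Eavg_norm_sum_sq_le (m : ℕ) (x : Fin m → X) :
    √(Eavg fun ε : Fin m → Bool => ‖∑ i, sgnR (ε i) • x i‖ ^ 2) ≤ √m * √(∑ i, ‖x i‖ ^ 2) := by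
  rw [← Real.sqrt_mul (Nat.cast_nonneg m), ← Eavg_const (α := Fin m → Bool) (m * _)]
  refine Real.sqrt_le_sqrt (Eavg_mono fun ε => ?_)
  have htri : ‖∑ i, sgnR (ε i) • x i‖ ≤ ∑ i, ‖x i‖ :=
    (norm_sum_le _ _).trans_eq (sum_congr rfl fun i _ => norm_sgnR_smul _ _)
  calc ‖∑ i, sgnR (ε i) • x i‖ ^ 2 ≤ (∑ i, ‖x i‖) ^ 2 := by gcongr
    _ ≤ m * ∑ i, ‖x i‖ ^ 2 := by simpa using sq_sum_le_card_mul_sum_sq (s := univ) (f := (‖x ·‖))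

lemma T2With_spec (m : ℕ) (X : Type*) [NormedAddCommGroup X] [NormedSpace ℝ X] :
    0 ≤ T2With m X ∧ ∀ x : Fin m → X,
      √(Eavg fun ε : Fin m → Bool => ‖∑ i, sgnR (ε i) • x i‖ ^ 2) ≤
        T2With m X * √(∑ i, ‖x i‖ ^ 2) := by
  let S : Set ℝ := {T | 0 ≤ T ∧ ∀ x : Fin m → X,
    √(Eavg fun ε : Fin m → Bool => ‖∑ i, sgnR (ε i) • x i‖ ^ 2) ≤ T * √(∑ i, ‖x i‖ ^ 2)}
  have hclosed : IsClosed S := by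
    simp only [S, Set.ofPred_and, Set.ofPred_forall]
    exact isClosed_Ici.inter (isClosed_iInter fun x =>
      isClosed_le continuous_const (continuous_id.mul continuous_const))
  exact hclosed.csInf_mem ⟨√m, Real.sqrt_nonneg _, sqrt_Eavg_norm_sum_sq_le m⟩
    ⟨0, fun T hT => hT.1⟩

lemma rademacherGrad_le_T2With {m : ℕ} (Φ : (Fin m → Bool) → X) :
    rademacherGrad Φ ≤ T2With m X * Eavg fun δ => √(∑ q, ‖discDeriv Φ q δ‖ ^ 2) := by
  rw [← Eavg_const_mul]
  exact Eavg_mono fun δ => (Eavg_le_sqrt_Eavg_sq fun ρ => norm_nonneg _).trans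
    ((T2With_spec m X).2 (discDeriv Φ · δ))

end TypeTwo

lemma sigma_eq {ι : Type} [Fintype ι] [DecidableEq ι] {X : Type*} [NormedAddCommGroup X]
    [NormedSpace ℝ X] (Φ : (ι → Bool) → X) :
    sigma Φ = Real.log (Fintype.card ι) * Eavg fun ε => √(∑ p, ‖discDeriv Φ p ε‖ ^ 2) := by
  simp only [sigma, norm_discDeriv]

end Pisier

/-- there is a universal constant `C > 0` such that for every Banach space
`X`, every `m ≥ 2` and every function `Φ : {−1,1}^m → X`:
`𝔼_ε ‖Φ(ε)‖ ≤ ‖𝔼_ε Φ(ε)‖ + C · σ_Φ · T2^{(m)}(X)`. -/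
theorem statement8 :
    ∃ C : ℝ, 0 < C ∧
      ∀ (X : Type) [NormedAddCommGroup X] [NormedSpace ℝ X] [CompleteSpace X]
        (m : ℕ), 2 ≤ m →
        ∀ Φ : (Fin m → Bool) → X,
          Eavg (fun ε => ‖Φ ε‖) ≤ ‖EavgVR Φ‖ + C * sigma Φ * T2With m X := by
  refine ⟨4, by norm_num, fun X _ _ _ m hm Φ => ?_⟩
  have : Nonempty (Fin m) := ⟨⟨0, by omega⟩⟩
  set S := Eavg fun δ => √(∑ q, ‖Pisier.discDeriv Φ q δ‖ ^ 2)
  have hS : 0 ≤ S := Pisier.Eavg_nonneg fun δ => Real.sqrt_nonneg _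
  have hT : 0 ≤ T2With m X := (Pisier.T2With_spec m X).1
  have hlog : 1 / 2 ≤ Real.log m :=
    calc (1 : ℝ) / 2 ≤ Real.log 2 := by linarith [Real.log_two_gt_d9]
      _ ≤ Real.log m := Real.log_le_log two_pos (by exact_mod_cast hm)
  calc Eavg (fun ε => ‖Φ ε‖) ≤ ‖EavgVR Φ‖ + Eavg fun ε => ‖Φ ε - EavgVR Φ‖ :=
        Pisier.Eavg_norm_le_norm_add_Eavg_norm_sub Φ _
    _ ≤ ‖EavgVR Φ‖ + (2 * Real.log m + 1) * (T2With m X * S) := by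
        grw [Pisier.Eavg_norm_sub_mean_le, Fintype.card_fin, Pisier.rademacherGrad_le_T2With]
    _ ≤ ‖EavgVR Φ‖ + 4 * sigma Φ * T2With m X := by
        rw [Pisier.sigma_eq, Fintype.card_fin]
        nlinarith [mul_nonneg hT hS]

end
end

section
/- There is a universal constant C > 0 such that for every integer n ≥ 1: 𝔼_ε sup{ |(1/n²) Σ_{i,j=1}^n ε_{ij} x_i y_j| : x, y ∈ ℂ^n with |x_i| ≤ 1 and |y_j| ≤ 1 for all i, j } ≤ C·n^{-1/2}. Equivalently, 𝔼_ε ‖(1/n²) Σ_{i,j} ε_{ij} e_i ⊗ e_j‖_{ℓ1^n ⊗_ε ℓ1^n} ≤ C·n^{-1/2}. -/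
/-!
Write `A_ε` for the real `n × n` sign matrix. Splitting `x` and `y` into real and imaginary
parts, the `ℓ1 ⊗_ε ℓ1` norm of `A_ε` is at most four times its `ℓ∞ → ℓ1` norm
`max_{u,v ∈ {±1}ⁿ} |uᵀ A_ε v|`. For fixed `u, v` the form `uᵀ A_ε v` is a sum of `n²`
independent signs, so `𝔼 exp (t uᵀ A_ε v) = cosh t ^ n² ≤ exp (n² t² / 2)`. Jensen's inequality
and a union bound over the `4ⁿ` pairs `(u, v)` give `exp (t 𝔼 max) ≤ 2 · 4ⁿ · exp (n² t² / 2)`;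
taking `t = n^{-1/2}` yields `𝔼 max ≤ 4 n^{3/2}`, hence the claim with `C = 16`.
-/

open scoped BigOperators

noncomputable section

def sgn (b : Bool) : ℂ := if b then 1 else -1

/-- The norm of `t` in `ℓ1^n ⊗_ε ℓ1^n`. -/
def l1epsNorm {n : ℕ} (t : Matrix (Fin n) (Fin n) ℂ) : ℝ :=
  sSup {s : ℝ | ∃ x y : Fin n → ℂ,
    (∀ i, ‖x i‖ ≤ 1) ∧ (∀ j, ‖y j‖ ≤ 1) ∧
    s = ‖∑ i, ∑ j, t i j * x i * y j‖}

open Finset Matrix Real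

section Eavg

variable {α : Type} [Fintype α]

lemma Eavg_mono {f g : α → ℝ} (h : ∀ a, f a ≤ g a) : Eavg f ≤ Eavg g :=
  div_le_div_of_nonneg_right (sum_le_sum fun a _ => h a) (Nat.cast_nonneg _)

lemma Eavg_const_mul (c : ℝ) (f : α → ℝ) : Eavg (fun a => c * f a) = c * Eavg f := by
  rw [Eavg, Eavg, ← mul_sum, mul_div_assoc]

lemma Eavg_sum {β : Type} [Fintype β] (f : β → α → ℝ) :
    Eavg (fun a => ∑ b, f b a) = ∑ b, Eavg (f b) := by
  rw [Eavg, sum_comm, sum_div]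
  rfl

lemma Eavg_add (f g : α → ℝ) : Eavg (fun a => f a + g a) = Eavg f + Eavg g := by
  rw [Eavg, Eavg, Eavg, sum_add_distrib, add_div]

lemma exp_Eavg_le [Nonempty α] (f : α → ℝ) : exp (Eavg f) ≤ Eavg (fun a => exp (f a)) := by
  have hcard : (0 : ℝ) < Fintype.card α := Nat.cast_pos.mpr Fintype.card_pos
  have hw : ∑ _a : α, (Fintype.card α : ℝ)⁻¹ = 1 := by
    rw [sum_const, card_univ, nsmul_eq_mul, mul_inv_cancel₀ hcard.ne']
  have := convexOn_exp.map_sum_le (t := univ) (w := fun _ => (Fintype.card α : ℝ)⁻¹) (p := f)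
    (fun _ _ => by positivity) hw (fun _ _ => Set.mem_univ _)
  simpa only [Eavg, smul_eq_mul, ← mul_sum, div_eq_inv_mul] using this

end Eavg

def realSgn (b : Bool) : ℝ := if b then 1 else -1

lemma sgn_eq_ofReal_realSgn (b : Bool) : sgn b = (realSgn b : ℂ) := by
  cases b <;> simp [sgn, realSgn]

lemma abs_realSgn (b : Bool) : |realSgn b| = 1 := by
  cases b <;> simp [realSgn]

lemma sum_exp_realSgn_mul (c : ℝ) : ∑ b : Bool, exp (realSgn b * c) = 2 * cosh c := by
  rw [Fintype.sum_bool, cosh_eq]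
  simp only [realSgn, if_true, Bool.false_eq_true, if_false, one_mul, neg_one_mul]
  ring

lemma Eavg_exp_sum_realSgn_mul {α : Type} [Fintype α] [DecidableEq α] (c : α → ℝ) :
    Eavg (fun ε : α → Bool => exp (∑ m, realSgn (ε m) * c m)) = ∏ m, cosh (c m) := by
  have hsum : ∑ ε : α → Bool, exp (∑ m, realSgn (ε m) * c m) =
      2 ^ Fintype.card α * ∏ m, cosh (c m) := by
    simp_rw [exp_sum]
    rw [← Fintype.prod_sum (fun m b => exp (realSgn b * c m))]
    simp_rw [sum_exp_realSgn_mul, prod_mul_distrib, prod_const, card_univ]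
  rw [Eavg, hsum, Fintype.card_fun, Fintype.card_bool]
  push_cast
  field_simp

section CubeNorm

variable {ι κ : Type*} [Fintype ι] [Fintype κ]

def signVec (u : ι → Bool) : ι → ℝ := fun i => realSgn (u i)

lemma abs_dotProduct_le_sum_abs {p : ι → ℝ} (hp : ∀ i, |p i| ≤ 1) (c : ι → ℝ) :
    |p ⬝ᵥ c| ≤ ∑ i, |c i| :=
  (abs_sum_le_sum_abs _ _).trans <| sum_le_sum fun i _ => by
    rw [abs_mul]
    exact mul_le_of_le_one_left (abs_nonneg _) (hp i)

lemma exists_signVec_dotProduct_eq_sum_abs (c : ι → ℝ) : ∃ u, signVec u ⬝ᵥ c = ∑ i, |c i| :=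
  ⟨fun i => decide (0 ≤ c i), sum_congr rfl fun i _ => by
    by_cases h : 0 ≤ c i
    · simp [signVec, realSgn, h, abs_of_nonneg h]
    · simp [signVec, realSgn, h, abs_of_neg (not_le.mp h)]⟩

lemma sum_sum_ofReal_mul_eq (a : Matrix ι κ ℝ) (x : ι → ℂ) (y : κ → ℂ) :
    ∑ i, ∑ j, (a i j : ℂ) * x i * y j =
      ((fun i => (x i).re) ⬝ᵥ a *ᵥ (fun j => (y j).re) -
        (fun i => (x i).im) ⬝ᵥ a *ᵥ (fun j => (y j).im) : ℝ) +
      ((fun i => (x i).re) ⬝ᵥ a *ᵥ (fun j => (y j).im) +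
        (fun i => (x i).im) ⬝ᵥ a *ᵥ (fun j => (y j).re) : ℝ) * Complex.I := by
  apply Complex.ext <;>
  simp [dotProduct, mulVec, Complex.re_sum, Complex.im_sum, mul_sum, sum_sub_distrib,
    ← sum_add_distrib, Complex.mul_re, Complex.mul_im] <;>
  simp only [mul_assoc, mul_left_comm]

variable [DecidableEq ι] [DecidableEq κ]

/-- The `ℓ∞ → ℓ1` norm of a real matrix; the maximum of the bilinear form over the cube is
attained at its vertices. -/
def cubeNorm (a : Matrix ι κ ℝ) : ℝ :=
  univ.sup' univ_nonempty fun p : (ι → Bool) × (κ → Bool) => |signVec p.1 ⬝ᵥ a *ᵥ signVec p.2|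

lemma abs_dotProduct_mulVec_signVec_le_cubeNorm (a : Matrix ι κ ℝ) (u : ι → Bool)
    (v : κ → Bool) : |signVec u ⬝ᵥ a *ᵥ signVec v| ≤ cubeNorm a :=
  le_sup' (fun p : (ι → Bool) × (κ → Bool) => |signVec p.1 ⬝ᵥ a *ᵥ signVec p.2|) (mem_univ (u, v))

lemma cubeNorm_nonneg (a : Matrix ι κ ℝ) : 0 ≤ cubeNorm a :=
  (abs_nonneg _).trans (abs_dotProduct_mulVec_signVec_le_cubeNorm a (fun _ => true) fun _ => true)

lemma abs_dotProduct_mulVec_le_cubeNorm (a : Matrix ι κ ℝ) {p : ι → ℝ} {q : κ → ℝ}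
    (hp : ∀ i, |p i| ≤ 1) (hq : ∀ j, |q j| ≤ 1) : |p ⬝ᵥ a *ᵥ q| ≤ cubeNorm a := by
  obtain ⟨u, hu⟩ := exists_signVec_dotProduct_eq_sum_abs (a *ᵥ q)
  obtain ⟨v, hv⟩ := exists_signVec_dotProduct_eq_sum_abs (signVec u ᵥ* a)
  calc |p ⬝ᵥ a *ᵥ q| ≤ signVec u ⬝ᵥ a *ᵥ q := hu ▸ abs_dotProduct_le_sum_abs hp _
    _ = q ⬝ᵥ signVec u ᵥ* a := by rw [dotProduct_mulVec, dotProduct_comm]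
    _ ≤ |q ⬝ᵥ signVec u ᵥ* a| := le_abs_self _
    _ ≤ signVec v ⬝ᵥ signVec u ᵥ* a := hv ▸ abs_dotProduct_le_sum_abs hq _
    _ = signVec u ⬝ᵥ a *ᵥ signVec v := by rw [dotProduct_mulVec, dotProduct_comm]
    _ ≤ |signVec u ⬝ᵥ a *ᵥ signVec v| := le_abs_self _
    _ ≤ cubeNorm a := abs_dotProduct_mulVec_signVec_le_cubeNorm a u v

lemma norm_sum_sum_ofReal_mul_le (a : Matrix ι κ ℝ) {x : ι → ℂ} {y : κ → ℂ}
    (hx : ∀ i, ‖x i‖ ≤ 1) (hy : ∀ j, ‖y j‖ ≤ 1) :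
    ‖∑ i, ∑ j, (a i j : ℂ) * x i * y j‖ ≤ 4 * cubeNorm a := by
  have hxre i : |(x i).re| ≤ 1 := (Complex.abs_re_le_norm _).trans (hx i)
  have hxim i : |(x i).im| ≤ 1 := (Complex.abs_im_le_norm _).trans (hx i)
  have hyre j : |(y j).re| ≤ 1 := (Complex.abs_re_le_norm _).trans (hy j)
  have hyim j : |(y j).im| ≤ 1 := (Complex.abs_im_le_norm _).trans (hy j)
  rw [sum_sum_ofReal_mul_eq]
  refine (norm_add_le _ _).trans ?_
  rw [norm_mul, Complex.norm_I, mul_one, Complex.norm_real, Complex.norm_real, Real.norm_eq_abs,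
    Real.norm_eq_abs]
  refine (add_le_add (abs_sub _ _) (abs_add_le _ _)).trans ?_
  linarith [abs_dotProduct_mulVec_le_cubeNorm a hxre hyre,
    abs_dotProduct_mulVec_le_cubeNorm a hxim hyim,
    abs_dotProduct_mulVec_le_cubeNorm a hxre hyim,
    abs_dotProduct_mulVec_le_cubeNorm a hxim hyre]

end CubeNorm

lemma l1epsNorm_of_mul_ofReal_le {n : ℕ} (c : ℂ) (a : Matrix (Fin n) (Fin n) ℝ) :
    l1epsNorm (Matrix.of fun i j => c * (a i j : ℂ)) ≤ ‖c‖ * (4 * cubeNorm a) := by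
  refine Real.sSup_le ?_ (by have := cubeNorm_nonneg a; positivity)
  rintro s ⟨x, y, hx, hy, rfl⟩
  have hfactor : ∑ i, ∑ j, (Matrix.of fun i j => c * (a i j : ℂ)) i j * x i * y j =
      c * ∑ i, ∑ j, (a i j : ℂ) * x i * y j := by
    simp only [Matrix.of_apply, mul_sum, mul_assoc]
  rw [hfactor, norm_mul]
  exact mul_le_mul_of_nonneg_left (norm_sum_sum_ofReal_mul_le a hx hy) (norm_nonneg c)

section RandomSignMatrix

variable {ι κ : Type} [Fintype ι] [DecidableEq ι] [Fintype κ] [DecidableEq κ]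

def signMatrix (ε : ι × κ → Bool) : Matrix ι κ ℝ := Matrix.of fun i j => realSgn (ε (i, j))

lemma Eavg_exp_mul_signVec_dotProduct_signMatrix (t : ℝ) (u : ι → Bool) (v : κ → Bool) :
    Eavg (fun ε => exp (t * (signVec u ⬝ᵥ signMatrix ε *ᵥ signVec v))) =
      cosh t ^ (Fintype.card ι * Fintype.card κ) := by
  have hsum (ε : ι × κ → Bool) : t * (signVec u ⬝ᵥ signMatrix ε *ᵥ signVec v) =
      ∑ m, realSgn (ε m) * (t * realSgn (u m.1) * realSgn (v m.2)) := by
    simp only [dotProduct, mulVec, signMatrix, signVec, Matrix.of_apply, mul_sum,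
      Fintype.sum_prod_type]
    exact sum_congr rfl fun i _ => sum_congr rfl fun j _ => by ring
  have hcosh (m : ι × κ) : cosh (t * realSgn (u m.1) * realSgn (v m.2)) = cosh t := by
    rw [← cosh_abs, abs_mul, abs_mul, abs_realSgn, abs_realSgn, mul_one, mul_one, cosh_abs]
  simp_rw [hsum, Eavg_exp_sum_realSgn_mul, hcosh, prod_const, card_univ, Fintype.card_prod]

/-- The union bound over the `2 ^ (|ι| + |κ|)` vertex pairs, each a sub-Gaussian sum of
`|ι| |κ|` independent signs. -/
lemma exp_mul_Eavg_cubeNorm_signMatrix_le (t : ℝ) :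
    exp (t * Eavg (fun ε : ι × κ → Bool => cubeNorm (signMatrix ε))) ≤
      2 * 2 ^ Fintype.card ι * 2 ^ Fintype.card κ *
        exp (t ^ 2 / 2) ^ (Fintype.card ι * Fintype.card κ) := by
  set S : (ι → Bool) × (κ → Bool) → (ι × κ → Bool) → ℝ :=
    fun p ε => signVec p.1 ⬝ᵥ signMatrix ε *ᵥ signVec p.2
  have hmax (ε : ι × κ → Bool) :
      exp (t * cubeNorm (signMatrix ε)) ≤ ∑ p, (exp (t * S p ε) + exp (-t * S p ε)) := by
    obtain ⟨p, -, hp⟩ := exists_mem_eq_sup' univ_nonempty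
      fun p : (ι → Bool) × (κ → Bool) => |S p ε|
    refine le_trans ?_ (single_le_sum (fun q _ => by positivity) (mem_univ p))
    rw [cubeNorm, hp]
    rcases abs_choice (S p ε) with h | h <;> rw [h]
    · exact le_add_of_nonneg_right (exp_pos _).le
    · rw [mul_neg, ← neg_mul]
      exact le_add_of_nonneg_left (exp_pos _).le
  have hmgf (s : ℝ) (p : (ι → Bool) × (κ → Bool)) : Eavg (fun ε => exp (s * S p ε)) ≤
      exp (s ^ 2 / 2) ^ (Fintype.card ι * Fintype.card κ) := by
    rw [Eavg_exp_mul_signVec_dotProduct_signMatrix]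
    exact pow_le_pow_left₀ (cosh_pos s).le (cosh_le_exp_half_sq s) _
  calc exp (t * Eavg (fun ε : ι × κ → Bool => cubeNorm (signMatrix ε)))
      ≤ Eavg (fun ε => exp (t * cubeNorm (signMatrix ε))) := by
        rw [← Eavg_const_mul]; exact exp_Eavg_le _
    _ ≤ ∑ p, (Eavg (fun ε => exp (t * S p ε)) + Eavg (fun ε => exp (-t * S p ε))) := by
        refine (Eavg_mono hmax).trans_eq ?_
        rw [Eavg_sum]
        exact sum_congr rfl fun p _ => Eavg_add _ _
    _ ≤ ∑ _p : (ι → Bool) × (κ → Bool), 2 * exp (t ^ 2 / 2) ^ (Fintype.card ι * Fintype.card κ) :=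
        sum_le_sum fun p _ => by linarith [hmgf t p, neg_sq t ▸ hmgf (-t) p]
    _ = _ := by
        rw [sum_const, card_univ, nsmul_eq_mul, Fintype.card_prod, Fintype.card_fun,
          Fintype.card_fun, Fintype.card_bool]
        push_cast
        ring

end RandomSignMatrix

lemma two_pow_le_exp (n : ℕ) : (2 : ℝ) ^ n ≤ exp n := by
  rw [← exp_one_pow]
  exact pow_le_pow_left₀ zero_le_two (by linarith [add_one_le_exp 1]) n

lemma Eavg_cubeNorm_signMatrix_le {n : ℕ} (hn : 0 < n) :
    Eavg (fun ε : Fin n × Fin n → Bool => cubeNorm (signMatrix ε)) ≤ 4 * n * √n := by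
  set E := Eavg (fun ε : Fin n × Fin n → Bool => cubeNorm (signMatrix ε))
  have hn' : (0 : ℝ) < n := Nat.cast_pos.mpr hn
  have hsqrt : 0 < √n := sqrt_pos.mpr hn'
  have hexp : exp ((√n)⁻¹ ^ 2 / 2) ^ (n * n) = exp (n / 2) := by
    rw [← exp_nat_mul, inv_pow, sq_sqrt hn'.le]
    congr 1
    push_cast
    field_simp
  have htwo : (2 : ℝ) ≤ exp n := (le_self_pow₀ one_le_two hn.ne').trans (two_pow_le_exp n)
  have hbound : exp ((√n)⁻¹ * E) ≤ exp (4 * n) := by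
    calc exp ((√n)⁻¹ * E) ≤ 2 * 2 ^ n * 2 ^ n * exp (n / 2) := by
          simpa only [Fintype.card_fin, hexp] using
            exp_mul_Eavg_cubeNorm_signMatrix_le (ι := Fin n) (κ := Fin n) (√n)⁻¹
      _ ≤ exp n * exp n * exp n * exp n := by
          gcongr
          · exact two_pow_le_exp n
          · exact two_pow_le_exp n
          · linarith
      _ = exp (4 * n) := by rw [← exp_add, ← exp_add, ← exp_add]; ring_nf
  have := exp_le_exp.mp hbound
  rw [inv_mul_le_iff₀ hsqrt] at this
  linarith

/-- there is a universal constant `C > 0` such that for every `n ≥ 1`,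
`𝔼_ε ‖(1/n²) Σ_{ij} ε_{ij} e_i ⊗ e_j‖_{ℓ1^n ⊗_ε ℓ1^n} ≤ C·n^{-1/2}`. -/
theorem statement16 :
    ∃ C : ℝ, 0 < C ∧
      ∀ n : ℕ, 1 ≤ n →
        Eavg (fun ε : Fin n × Fin n → Bool =>
          l1epsNorm (Matrix.of fun i j => ((n : ℂ) ^ 2)⁻¹ * sgn (ε (i, j))))
          ≤ C / Real.sqrt n := by
  refine ⟨16, by norm_num, fun n hn => ?_⟩
  have hpointwise (ε : Fin n × Fin n → Bool) :
      l1epsNorm (Matrix.of fun i j => ((n : ℂ) ^ 2)⁻¹ * sgn (ε (i, j))) ≤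
        ((n : ℝ) ^ 2)⁻¹ * 4 * cubeNorm (signMatrix ε) := by
    have hnorm : ‖((n : ℂ) ^ 2)⁻¹‖ = ((n : ℝ) ^ 2)⁻¹ := by
      rw [norm_inv, norm_pow, Complex.norm_natCast]
    have := l1epsNorm_of_mul_ofReal_le ((n : ℂ) ^ 2)⁻¹ (signMatrix ε)
    rw [hnorm] at this
    simpa only [signMatrix, Matrix.of_apply, sgn_eq_ofReal_realSgn, mul_assoc] using this
  calc Eavg (fun ε : Fin n × Fin n → Bool =>
        l1epsNorm (Matrix.of fun i j => ((n : ℂ) ^ 2)⁻¹ * sgn (ε (i, j))))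
      ≤ ((n : ℝ) ^ 2)⁻¹ * 4 * Eavg (fun ε : Fin n × Fin n → Bool => cubeNorm (signMatrix ε)) :=
        (Eavg_mono hpointwise).trans_eq (Eavg_const_mul _ _)
    _ ≤ ((n : ℝ) ^ 2)⁻¹ * 4 * (4 * n * √n) := by
        gcongr
        exact Eavg_cubeNorm_signMatrix_le hn
    _ = 16 / √n := by
        field_simp
        rw [sq_sqrt (Nat.cast_nonneg n)]
        ring

end
end
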